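/- arXiv:2309.06211 — 6 statements merged into one kernel-verified Lean document; each statement's English description precedes it below -/
import Mathlib

section
/- For every x ∈ I: x belongs to F if and only if at least one of s(x−), s(x), s(x+) belongs to F̂ (with the conventions s(0−) := s(0), and s(r+) := s(r) when r ∈ I). -/
open MeasureTheory Set Filter Topology
open scoped Classical

/-- The interval `[0, r)` inside `ℝ`, for `r ∈ (0, ∞]`. -/
def Ilt (r : EReal) : Set ℝ := {x : ℝ | 0 ≤ x ∧ (x : EReal) < r}

/-- `r̂ = s(r−)`, the supremum of `s` over `[0, r)`, as an extended real. -/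
noncomputable def rhat (s : ℝ → ℝ) (r : EReal) : EReal :=
  sSup ((fun x : ℝ => (s x : EReal)) '' Ilt r)

/-- `s(x−)`, the left limit of the increasing function `s` at `x` (with the
convention `s(0−) = s(0)`, i.e. `s(x−) = s(x)` when no point of `I` lies below `x`). -/
noncomputable def sminus (s : ℝ → ℝ) (I : Set ℝ) (x : ℝ) : ℝ :=
  if (I ∩ Set.Iio x).Nonempty then sSup (s '' (I ∩ Set.Iio x)) else s x

/-- `s(x+)`, the right limit of the increasing function `s` at `x` (with the
convention `s(r+) = s(r)` when `r ∈ I`, i.e. `s(x+) = s(x)` when no point of `I`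
lies above `x`). -/
noncomputable def splus (s : ℝ → ℝ) (I : Set ℝ) (x : ℝ) : ℝ :=
  if (I ∩ Set.Ioi x).Nonempty then sInf (s '' (I ∩ Set.Ioi x)) else s x

/-- `s(I)`, viewed inside `[−∞, ∞]`. -/
def sImage (s : ℝ → ℝ) (I : Set ℝ) : Set EReal := (fun x : ℝ => (s x : EReal)) '' I

/-- `Î`: the closure of `s(I)` in `[−∞,∞]` if `r ∈ I`, and this closure with the
point `r̂` removed if `r ∉ I`. -/
noncomputable def Ihat (s : ℝ → ℝ) (I : Set ℝ) (r : EReal) : Set EReal :=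
  if ∃ rr : ℝ, (rr : EReal) = r ∧ rr ∈ I then closure (sImage s I)
  else closure (sImage s I) \ {rhat s r}

/-- `F`, the topological support of `m` in `I`. -/
def Fsupp (m : Measure ℝ) (I : Set ℝ) : Set ℝ :=
  {x : ℝ | x ∈ I ∧ ∀ ε : ℝ, 0 < ε → 0 < m (Set.Ioo (x - ε) (x + ε) ∩ I)}

/-- `F̂`, the topological support of `m̂ = s_*m` in `Î`. -/
noncomputable def Fhatsupp (m : Measure ℝ) (I : Set ℝ) (s : ℝ → ℝ) (r : EReal) :
    Set ℝ :=
  {xh : ℝ | (xh : EReal) ∈ Ihat s I r ∧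
    ∀ ε : ℝ, 0 < ε → 0 < Measure.map s m (Set.Ioo (xh - ε) (xh + ε))}

/-- `Ḟ = {x ∈ F : s(x) ∈ F̂}`. -/
noncomputable def Fdot (m : Measure ℝ) (I : Set ℝ) (s : ℝ → ℝ) (r : EReal) : Set ℝ :=
  {x ∈ Fsupp m I | s x ∈ Fhatsupp m I s r}

/-!
Near `x ∈ I` the measure `m` splits into its parts on `I ∩ (−∞, x)`, on `{x}` and on
`I ∩ (x, ∞)`, and `x` lies in the support of one of them. Along these three pieces `s` converges
to `s(x−)`, `s(x)` and `s(x+)`, and a map carries a support point of a restricted measure to a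
support point of the image measure whenever it converges along the restricting set.
Conversely, each of the three values lies strictly above `s` on `I ∩ (−∞, x)` and strictly below
it on `I ∩ (x, ∞)`; as `s` is strictly increasing on the order-connected set `I`, small
neighbourhoods of the value pull back into any given neighbourhood of `x`.
Finally the support of `m̂` lies in the closure of `s(I)`, and each of the three values is at most
some `s(y)` with `y ∈ I`, hence differs from `r̂` when `r ∉ I`: so it lies in `Î`.
-/

namespace MeasureTheory.Measure

lemma mem_support_iff_forall_Ioo {μ : Measure ℝ} {x : ℝ} :
    x ∈ μ.support ↔ ∀ ε : ℝ, 0 < ε → 0 < μ (Ioo (x - ε) (x + ε)) := by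
  simpa only [Real.ball_eq_Ioo] using (Metric.nhds_basis_ball (x := x)).mem_measureSupport (μ := μ)

section

variable {X Y : Type*} [MeasurableSpace X] [TopologicalSpace Y] [MeasurableSpace Y]
  {μ : Measure X}

lemma support_map_subset_closure_image [OpensMeasurableSpace Y] {S : Set X} {f : X → Y}
    (hf : AEMeasurable f μ) (hS : μ Sᶜ = 0) : (μ.map f).support ⊆ closure (f '' S) := by
  refine support_subset_of_isClosed isClosed_closure ?_
  rw [mem_ae_map_iff hf isClosed_closure.measurableSet]
  exact mem_of_superset (mem_ae_iff.mpr hS) fun x hx => subset_closure (mem_image_of_mem f hx)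

lemma mem_support_map_of_tendsto [TopologicalSpace X] [OpensMeasurableSpace X]
    {S : Set X} {f : X → Y} {x : X} {y : Y}
    (hf : AEMeasurable f μ) (hx : x ∈ (μ.restrict S).support)
    (hlim : Tendsto f (𝓝[S] x) (𝓝 y)) : y ∈ (μ.map f).support := by
  rw [mem_support_iff_forall] at hx ⊢
  intro U hU
  obtain ⟨V, ⟨hxV, hVo⟩, hVS⟩ := (nhdsWithin_basis_open x S).mem_iff.mp (hlim hU)
  calc 0 < μ.restrict S V := hx V (hVo.mem_nhds hxV)
    _ = μ (V ∩ S) := restrict_apply hVo.measurableSet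
    _ ≤ μ (f ⁻¹' U) := measure_mono hVS
    _ ≤ μ.map f U := le_map_apply hf U

end

section

variable {X : Type*} [TopologicalSpace X] [MeasurableSpace X] {μ : Measure X}

lemma support_restrict_union_subset (A B : Set X) :
    (μ.restrict (A ∪ B)).support ⊆ (μ.restrict A).support ∪ (μ.restrict B).support := by
  rw [← support_add]
  exact support_mono (restrict_union_le A B)

lemma mem_support_restrict_of_mem_support [LinearOrder X] {I : Set X} {x : X} (hμI : μ Iᶜ = 0)
    (hx : x ∈ μ.support) :
    x ∈ (μ.restrict (I ∩ Iio x)).support ∨ x ∈ (μ.restrict {x}).support ∨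
      x ∈ (μ.restrict (I ∩ Ioi x)).support := by
  have hcover : I ⊆ I ∩ Iio x ∪ ({x} ∪ I ∩ Ioi x) := by
    intro y hy
    rcases lt_trichotomy y x with h | rfl | h
    exacts [Or.inl ⟨hy, h⟩, Or.inr (Or.inl rfl), Or.inr (Or.inr ⟨hy, h⟩)]
  rw [← restrict_eq_self_of_ae_mem (mem_ae_iff.mpr hμI)] at hx
  replace hx := support_mono (restrict_mono hcover le_rfl) hx
  exact union_subset_union_right _ (support_restrict_union_subset _ _)
    (support_restrict_union_subset _ _ hx)

end

end MeasureTheory.Measure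

section Order

variable {α β : Type*} [LinearOrder α] [LinearOrder β] {f : α → β} {I : Set α} {x l u : α} {c : β}

lemma StrictMonoOn.exists_lt_forall_lt [NoMinOrder β] (hI : I.OrdConnected)
    (hf : StrictMonoOn f I) (hx : x ∈ I) (hlx : l < x) (hc : ∀ y ∈ I, y < x → f y < c) :
    ∃ a < c, ∀ y ∈ I, a < f y → l < y := by
  by_cases hl : l ∈ I
  · exact ⟨f l, hc l hl hlx, fun y hy hly => (hf.lt_iff_lt hl hy).mp hly⟩
  · obtain ⟨a, hac⟩ := exists_lt c
    exact ⟨a, hac, fun y hy _ => lt_of_not_ge fun hyl => hl (hI.out hy hx ⟨hyl, hlx.le⟩)⟩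

lemma StrictMonoOn.exists_gt_forall_gt [NoMaxOrder β] (hI : I.OrdConnected)
    (hf : StrictMonoOn f I) (hx : x ∈ I) (hxu : x < u) (hc : ∀ y ∈ I, x < y → c < f y) :
    ∃ b > c, ∀ y ∈ I, f y < b → y < u :=
  StrictMonoOn.exists_lt_forall_lt (α := αᵒᵈ) (β := βᵒᵈ) hI.dual hf.dual hx hxu hc

lemma MonotoneOn.bddAbove_image_inter_Iio (hf : MonotoneOn f I) (hx : x ∈ I) :
    BddAbove (f '' (I ∩ Iio x)) :=
  ⟨f x, by rintro _ ⟨y, ⟨hy, hyx⟩, rfl⟩; exact hf hy hx hyx.le⟩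

lemma MonotoneOn.bddBelow_image_inter_Ioi (hf : MonotoneOn f I) (hx : x ∈ I) :
    BddBelow (f '' (I ∩ Ioi x)) :=
  MonotoneOn.bddAbove_image_inter_Iio (α := αᵒᵈ) (β := βᵒᵈ) hf.dual hx

end Order

section Topology

variable {α β : Type*} [LinearOrder α] [TopologicalSpace α] [OrderTopology α]
  [ConditionallyCompleteLinearOrder β] [TopologicalSpace β] [OrderTopology β]
  {f : α → β} {I : Set α} {x : α}

lemma MonotoneOn.tendsto_nhdsWithin_inter_Iio (hf : MonotoneOn f I) (hx : x ∈ I) :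
    Tendsto f (𝓝[I ∩ Iio x] x) (𝓝 (sSup (f '' (I ∩ Iio x)))) := by
  rcases eq_empty_or_nonempty (I ∩ Iio x) with hempty | hne
  · simp [hempty]
  have hbdd := hf.bddAbove_image_inter_Iio hx
  refine tendsto_order.2 ⟨fun b hb => ?_, fun b hb => ?_⟩
  · obtain ⟨_, ⟨z, ⟨hz, hzx⟩, rfl⟩, hbz⟩ := exists_lt_of_lt_csSup (hne.image f) hb
    filter_upwards [self_mem_nhdsWithin, nhdsWithin_le_nhds (Ioi_mem_nhds hzx)] with w hw hzw
    exact hbz.trans_le (hf hz hw.1 hzw.le)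
  · filter_upwards [self_mem_nhdsWithin] with w hw
    exact (le_csSup hbdd (mem_image_of_mem f hw)).trans_lt hb

lemma MonotoneOn.tendsto_nhdsWithin_inter_Ioi (hf : MonotoneOn f I) (hx : x ∈ I) :
    Tendsto f (𝓝[I ∩ Ioi x] x) (𝓝 (sInf (f '' (I ∩ Ioi x)))) :=
  MonotoneOn.tendsto_nhdsWithin_inter_Iio (α := αᵒᵈ) (β := βᵒᵈ) hf.dual hx

end Topology

lemma StrictMonoOn.mem_support_of_mem_support_map {X Y : Type*}
    [LinearOrder X] [TopologicalSpace X] [OrderTopology X] [NoMinOrder X] [NoMaxOrder X]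
    [MeasurableSpace X] [LinearOrder Y] [TopologicalSpace Y] [OrderTopology Y] [NoMinOrder Y]
    [NoMaxOrder Y] [MeasurableSpace Y] [OpensMeasurableSpace Y]
    {μ : Measure X} {f : X → Y} {I : Set X} {x : X} {c : Y}
    (hI : I.OrdConnected) (hf : StrictMonoOn f I) (hmeas : Measurable f) (hμI : μ Iᶜ = 0)
    (hx : x ∈ I) (hleft : ∀ y ∈ I, y < x → f y < c) (hright : ∀ y ∈ I, x < y → c < f y)
    (hc : c ∈ (μ.map f).support) : x ∈ μ.support := by
  rw [Measure.mem_support_iff_forall] at hc ⊢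
  intro U hU
  obtain ⟨l, u, ⟨hlx, hxu⟩, hU⟩ := mem_nhds_iff_exists_Ioo_subset.mp hU
  obtain ⟨a, hac, ha⟩ := hf.exists_lt_forall_lt hI hx hlx hleft
  obtain ⟨b, hcb, hb⟩ := hf.exists_gt_forall_gt hI hx hxu hright
  have hpos := hc _ (Ioo_mem_nhds hac hcb)
  rw [Measure.map_apply hmeas measurableSet_Ioo, ← measure_inter_conull hμI] at hpos
  exact hpos.trans_le (measure_mono fun y ⟨⟨hay, hyb⟩, hy⟩ => hU ⟨ha y hy hay, hb y hy hyb⟩)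

section OneSidedLimits

variable {s : ℝ → ℝ} {I : Set ℝ} {x y : ℝ}

lemma sminus_le (hs : MonotoneOn s I) (hx : x ∈ I) : sminus s I x ≤ s x := by
  unfold sminus
  split_ifs with hne
  · exact csSup_le (hne.image s) fun _ ⟨z, ⟨hz, hzx⟩, hsz⟩ => hsz ▸ hs hz hx hzx.le
  · exact le_rfl

lemma le_splus (hs : MonotoneOn s I) (hx : x ∈ I) : s x ≤ splus s I x := by
  unfold splus
  split_ifs with hne
  · exact le_csInf (hne.image s) fun _ ⟨z, ⟨hz, hxz⟩, hsz⟩ => hsz ▸ hs hx hz hxz.le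
  · exact le_rfl

lemma lt_sminus (hI : I.OrdConnected) (hs : StrictMonoOn s I) (hx : x ∈ I) (hy : y ∈ I)
    (hyx : y < x) : s y < sminus s I x := by
  rw [sminus, if_pos ⟨y, hy, hyx⟩]
  obtain ⟨z, hyz, hzx⟩ := exists_between hyx
  have hz : z ∈ I := hI.out hy hx ⟨hyz.le, hzx.le⟩
  exact (hs hy hz hyz).trans_le
    (le_csSup (hs.monotoneOn.bddAbove_image_inter_Iio hx) ⟨z, ⟨hz, hzx⟩, rfl⟩)

lemma splus_lt (hI : I.OrdConnected) (hs : StrictMonoOn s I) (hx : x ∈ I) (hy : y ∈ I)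
    (hxy : x < y) : splus s I x < s y := by
  rw [splus, if_pos ⟨y, hy, hxy⟩]
  obtain ⟨z, hxz, hzy⟩ := exists_between hxy
  have hz : z ∈ I := hI.out hx hy ⟨hxz.le, hzy.le⟩
  exact (csInf_le (hs.monotoneOn.bddBelow_image_inter_Ioi hx) ⟨z, ⟨hz, hxz⟩, rfl⟩).trans_lt
    (hs hz hy hzy)

lemma tendsto_sminus (hs : MonotoneOn s I) (hx : x ∈ I) :
    Tendsto s (𝓝[I ∩ Iio x] x) (𝓝 (sminus s I x)) := by
  unfold sminus
  split_ifs with hne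
  · exact hs.tendsto_nhdsWithin_inter_Iio hx
  · simp [not_nonempty_iff_eq_empty.mp hne]

lemma tendsto_splus (hs : MonotoneOn s I) (hx : x ∈ I) :
    Tendsto s (𝓝[I ∩ Ioi x] x) (𝓝 (splus s I x)) := by
  unfold splus
  split_ifs with hne
  · exact hs.tendsto_nhdsWithin_inter_Ioi hx
  · simp [not_nonempty_iff_eq_empty.mp hne]

end OneSidedLimits

lemma ordConnected_Ilt (r : EReal) : (Ilt r).OrdConnected :=
  ⟨fun _ ha _ hb _ hc => ⟨ha.1.trans hc.1, (EReal.coe_le_coe_iff.mpr hc.2).trans_lt hb.2⟩⟩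

lemma mem_Fsupp_iff {m : Measure ℝ} {I : Set ℝ} {x : ℝ} (hmI : m Iᶜ = 0) :
    x ∈ Fsupp m I ↔ x ∈ I ∧ x ∈ m.support := by
  simp only [Fsupp, mem_ofPred_eq, measure_inter_conull hmI, Measure.mem_support_iff_forall_Ioo]

lemma mem_Fhatsupp_iff {m : Measure ℝ} {I : Set ℝ} {s : ℝ → ℝ} {r : EReal} {c : ℝ} :
    c ∈ Fhatsupp m I s r ↔ (c : EReal) ∈ Ihat s I r ∧ c ∈ (m.map s).support := by
  rw [Fhatsupp, mem_ofPred_eq, Measure.mem_support_iff_forall_Ioo]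

lemma coe_mem_Ihat {r : EReal} {I : Set ℝ} {s : ℝ → ℝ}
    (hI : I = Ilt r ∨ ∃ rr : ℝ, r = (rr : EReal) ∧ I = Set.Icc 0 rr)
    (hslt : ∀ x ∈ Ilt r, ((s x : ℝ) : EReal) < rhat s r) {c y : ℝ}
    (hc : c ∈ closure (s '' I)) (hy : y ∈ I) (hcy : c ≤ s y) : (c : EReal) ∈ Ihat s I r := by
  have hc' : (c : EReal) ∈ closure (sImage s I) :=
    map_mem_closure continuous_coe_real_ereal hc fun _ ⟨z, hz, hsz⟩ => ⟨z, hz, congrArg _ hsz⟩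
  unfold Ihat
  split_ifs with hend
  · exact hc'
  · have hyIlt : y ∈ Ilt r := by
      rcases hI with rfl | ⟨rr, rfl, rfl⟩
      · exact hy
      · exact absurd ⟨rr, rfl, hy.1.trans hy.2, le_rfl⟩ hend
    exact ⟨hc', ((EReal.coe_le_coe_iff.mpr hcy).trans_lt (hslt y hyIlt)).ne⟩

lemma mem_Fhatsupp_of_mem_support_map {r : EReal} {I : Set ℝ} {s : ℝ → ℝ} {m : Measure ℝ}
    (hI : I = Ilt r ∨ ∃ rr : ℝ, r = (rr : EReal) ∧ I = Set.Icc 0 rr)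
    (hslt : ∀ x ∈ Ilt r, ((s x : ℝ) : EReal) < rhat s r) (hmeas : Measurable s)
    (hmI : m Iᶜ = 0) {c y : ℝ} (hc : c ∈ (m.map s).support) (hy : y ∈ I) (hcy : c ≤ s y) :
    c ∈ Fhatsupp m I s r :=
  mem_Fhatsupp_iff.mpr ⟨coe_mem_Ihat hI hslt
    (Measure.support_map_subset_closure_image hmeas.aemeasurable hmI hc) hy hcy, hc⟩

theorem stmt11_general (r : EReal) (I : Set ℝ)
    (hI : I = Ilt r ∨ ∃ rr : ℝ, r = (rr : EReal) ∧ I = Set.Icc 0 rr)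
    (s : ℝ → ℝ) (hmono : StrictMonoOn s I)
    (hslt : ∀ x ∈ Ilt r, ((s x : ℝ) : EReal) < rhat s r)
    (hmeas : Measurable s)
    (m : Measure ℝ) (hmI : m Iᶜ = 0) :
    ∀ x ∈ I, (x ∈ Fsupp m I ↔
      (sminus s I x ∈ Fhatsupp m I s r ∨ s x ∈ Fhatsupp m I s r ∨
        splus s I x ∈ Fhatsupp m I s r)) := by
  have hIc : I.OrdConnected := by
    rcases hI with rfl | ⟨rr, -, rfl⟩
    exacts [ordConnected_Ilt r, ordConnected_Icc]
  have hF {c y : ℝ} (hc : c ∈ (m.map s).support) (hy : y ∈ I) (hcy : c ≤ s y) :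
      c ∈ Fhatsupp m I s r :=
    mem_Fhatsupp_of_mem_support_map hI hslt hmeas hmI hc hy hcy
  have hpush {S : Set ℝ} {x c : ℝ} (hx : x ∈ (m.restrict S).support)
      (hlim : Tendsto s (𝓝[S] x) (𝓝 c)) : c ∈ (m.map s).support :=
    Measure.mem_support_map_of_tendsto hmeas.aemeasurable hx hlim
  have hpull {x c : ℝ} (hx : x ∈ I) (hleft : ∀ y ∈ I, y < x → s y < c)
      (hright : ∀ y ∈ I, x < y → c < s y) (hc : c ∈ Fhatsupp m I s r) : x ∈ m.support :=
    hmono.mem_support_of_mem_support_map hIc hmeas hmI hx hleft hright (mem_Fhatsupp_iff.mp hc).2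
  intro x hx
  rw [mem_Fsupp_iff hmI, and_iff_right hx]
  constructor
  · intro hsupp
    rcases Measure.mem_support_restrict_of_mem_support hmI hsupp with h | h | h
    · exact Or.inl (hF (hpush h (tendsto_sminus hmono.monotoneOn hx)) hx
        (sminus_le hmono.monotoneOn hx))
    · have hlim : Tendsto s (𝓝[{x}] x) (𝓝 (s x)) := by
        rw [nhdsWithin_singleton]
        exact tendsto_pure_nhds s x
      exact Or.inr (Or.inl (hF (hpush h hlim) hx le_rfl))
    · obtain ⟨y, hy, hxy⟩ : (I ∩ Ioi x).Nonempty :=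
        nonempty_iff_ne_empty.mpr fun hempty => by simp [hempty] at h
      exact Or.inr (Or.inr (hF (hpush h (tendsto_splus hmono.monotoneOn hx)) hy
        (splus_lt hIc hmono hx hy hxy).le))
  · rintro (h | h | h)
    · exact hpull hx (fun y hy hyx => lt_sminus hIc hmono hx hy hyx)
        (fun y hy hxy => (sminus_le hmono.monotoneOn hx).trans_lt (hmono hx hy hxy)) h
    · exact hpull hx (fun y hy hyx => hmono hy hx hyx) (fun y hy hxy => hmono hx hy hxy) h
    · exact hpull hx (fun y hy hyx => (hmono hy hx hyx).trans_le (le_splus hmono.monotoneOn hx))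
        (fun y hy hxy => splus_lt hIc hmono hx hy hxy) h

theorem stmt11 (r : EReal) (hr : 0 < r) (I : Set ℝ)
    (hI : I = Ilt r ∨ ∃ rr : ℝ, r = (rr : EReal) ∧ I = Set.Icc 0 rr)
    (s : ℝ → ℝ) (hmono : StrictMonoOn s I) (hs0 : s 0 = 0)
    (hs0p : Filter.Tendsto s (nhdsWithin 0 (Set.Ioi 0)) (nhds 0))
    (hslt : ∀ x ∈ Ilt r, ((s x : ℝ) : EReal) < rhat s r)
    (hsr : ∀ rr : ℝ, r = (rr : EReal) → rr ∈ I → ((s rr : ℝ) : EReal) = rhat s r)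
    (hmeas : Measurable s)
    (m : Measure ℝ) (hmI : m Iᶜ = 0)
    (hfin : ∀ x ∈ I, m (Set.Icc 0 x) < ⊤)
    (hm0 : m ({0} : Set ℝ) = 0)
    (hmpos1 : ∀ x ∈ I, x ≠ 0 → 0 < m (Set.Ioc 0 x))
    (hmpos2 : ∀ c : ℝ, 0 < c → (c : EReal) < r → 0 < m {y : ℝ | c < y ∧ (y : EReal) < r}) :
    ∀ x ∈ I, (x ∈ Fsupp m I ↔
      (sminus s I x ∈ Fhatsupp m I s r ∨ s x ∈ Fhatsupp m I s r ∨
        splus s I x ∈ Fhatsupp m I s r)) :=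
  stmt11_general r I hI s hmono hslt hmeas m hmI
end

section
/- Set Ḟ := {x ∈ F : s(x) ∈ F̂}. Then m(F ∖ Ḟ) = 0 and m̂(F̂ ∖ s(Ḟ)) = 0. Consequently, F is the closure of Ḟ relative to I, and F̂ is the closure of s(Ḟ) relative to Î. -/
open MeasureTheory Set Filter Topology
open scoped Classical

lemma nullCover (μ : Measure ℝ) (J : Set ℝ) :
    ∃ U : Set ℝ, MeasurableSet U ∧ μ (U ∩ J) = 0 ∧
      ∀ y : ℝ, ∀ ε : ℝ, 0 < ε → μ (Set.Ioo (y-ε) (y+ε) ∩ J) = 0 → y ∈ U := by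
  refine ⟨⋃ p ∈ {p : ℚ × ℚ | μ (Set.Ioo (p.1:ℝ) (p.2:ℝ) ∩ J) = 0}, Set.Ioo (p.1:ℝ) (p.2:ℝ),
    ?_, ?_, ?_⟩
  · exact MeasurableSet.biUnion (Set.to_countable _) (fun p _ => measurableSet_Ioo)
  · rw [Set.iUnion₂_inter]
    rw [measure_biUnion_null_iff (Set.to_countable _)]
    exact fun p hp => hp
  · intro y ε hε h0
    obtain ⟨q, hq1, hq2⟩ := exists_rat_btwn (show y - ε < y by linarith)
    obtain ⟨q', hq'1, hq'2⟩ := exists_rat_btwn (show y < y + ε by linarith)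
    have hmem : ((q, q') : ℚ × ℚ) ∈ {p : ℚ × ℚ | μ (Set.Ioo (p.1:ℝ) (p.2:ℝ) ∩ J) = 0} := by
      refine measure_mono_null ?_ h0
      rintro z ⟨⟨hz1, hz2⟩, hzJ⟩
      exact ⟨⟨by linarith, by linarith⟩, hzJ⟩
    exact Set.mem_biUnion hmem ⟨hq2, hq'1⟩

lemma countable_rgap (S : Set ℝ) :
    {y : ℝ | y ∈ closure S ∧ ∃ ε : ℝ, 0 < ε ∧ Set.Ioo y (y+ε) ∩ S = ∅}.Countable := by
  set T := {y : ℝ | y ∈ closure S ∧ ∃ ε : ℝ, 0 < ε ∧ Set.Ioo y (y+ε) ∩ S = ∅} with hT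
  have key : ∀ y ∈ T, ∃ q : ℚ, y < (q:ℝ) ∧ ∀ z ∈ closure S, z ∉ Set.Ioo y (q:ℝ) := by
    rintro y ⟨hyc, ε, hε, hgap⟩
    obtain ⟨q, hq1, hq2⟩ := exists_rat_btwn (show y < y+ε by linarith)
    have hdisj : closure S ⊆ (Set.Ioo y (y+ε))ᶜ := by
      apply closure_minimal _ isOpen_Ioo.isClosed_compl
      intro w hw hmem
      exact Set.eq_empty_iff_forall_notMem.mp hgap w ⟨hmem, hw⟩
    refine ⟨q, hq1, fun z hz hmem => hdisj hz ⟨hmem.1, lt_trans hmem.2 hq2⟩⟩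
  choose! q hq1 hq2 using key
  have hinj : Set.InjOn q T := by
    intro y1 h1 y2 h2 heq
    by_contra hne
    rcases lt_or_gt_of_ne hne with h | h
    · exact hq2 y1 h1 y2 h2.1 ⟨h, heq ▸ hq1 y2 h2⟩
    · exact hq2 y2 h2 y1 h1.1 ⟨h, heq.symm ▸ hq1 y1 h1⟩
  exact Set.countable_of_injective_of_countable_image hinj (Set.to_countable _)

lemma countable_lgap (S : Set ℝ) :
    {y : ℝ | y ∈ closure S ∧ ∃ ε : ℝ, 0 < ε ∧ Set.Ioo (y-ε) y ∩ S = ∅}.Countable := by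
  set T := {y : ℝ | y ∈ closure S ∧ ∃ ε : ℝ, 0 < ε ∧ Set.Ioo (y-ε) y ∩ S = ∅} with hT
  have key : ∀ y ∈ T, ∃ q : ℚ, (q:ℝ) < y ∧ ∀ z ∈ closure S, z ∉ Set.Ioo (q:ℝ) y := by
    rintro y ⟨hyc, ε, hε, hgap⟩
    obtain ⟨q, hq1, hq2⟩ := exists_rat_btwn (show y - ε < y by linarith)
    have hdisj : closure S ⊆ (Set.Ioo (y-ε) y)ᶜ := by
      apply closure_minimal _ isOpen_Ioo.isClosed_compl
      intro w hw hmem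
      exact Set.eq_empty_iff_forall_notMem.mp hgap w ⟨hmem, hw⟩
    refine ⟨q, hq2, fun z hz hmem => hdisj hz ⟨lt_trans hq1 hmem.1, hmem.2⟩⟩
  choose! q hq1 hq2 using key
  have hinj : Set.InjOn q T := by
    intro y1 h1 y2 h2 heq
    by_contra hne
    rcases lt_or_gt_of_ne hne with h | h
    · exact hq2 y2 h2 y1 h1.1 ⟨heq ▸ hq1 y1 h1, h⟩
    · exact hq2 y1 h1 y2 h2.1 ⟨heq.symm ▸ hq1 y2 h2, h⟩
  exact Set.countable_of_injective_of_countable_image hinj (Set.to_countable _)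

lemma no_two_sided (I : Set ℝ) (s : ℝ → ℝ) (hmono : StrictMonoOn s I)
    (hOC : ∀ a ∈ I, ∀ b : ℝ, 0 ≤ b → b ≤ a → b ∈ I) (hnn : ∀ a ∈ I, 0 ≤ a)
    (y : ℝ) (hy : y ∉ s '' I)
    (hl : ∀ ε : ℝ, 0 < ε → (Set.Ioo (y-ε) y ∩ s '' I).Nonempty)
    (hr : ∀ ε : ℝ, 0 < ε → (Set.Ioo y (y+ε) ∩ s '' I).Nonempty) : False := by
  obtain ⟨v2, ⟨hv2a, _⟩, x2, hx2I, rfl⟩ :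
      ∃ v, (v ∈ Set.Ioo y (y+1)) ∧ ∃ x2 ∈ I, s x2 = v := by
    obtain ⟨v, hv1, x2, hx2I, hx2⟩ := hr 1 one_pos
    exact ⟨v, hv1, x2, hx2I, hx2⟩
  obtain ⟨v1, ⟨_, hv1b⟩, x1, hx1I, rfl⟩ :
      ∃ v, (v ∈ Set.Ioo (y-1) y) ∧ ∃ x1 ∈ I, s x1 = v := by
    obtain ⟨v, hv1, x1, hx1I, hx1⟩ := hl 1 one_pos
    exact ⟨v, hv1, x1, hx1I, hx1⟩
  set A := {x : ℝ | x ∈ I ∧ s x < y} with hA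
  have hx1A : x1 ∈ A := ⟨hx1I, hv1b⟩
  have hbdd : ∀ x ∈ A, x ≤ x2 := by
    rintro x ⟨hxI, hxy⟩
    by_contra h
    push_neg at h
    exact absurd (lt_trans hxy hv2a) (not_lt.mpr ((hmono hx2I hxI h).le))
  have hbdd' : BddAbove A := ⟨x2, fun x hx => hbdd x hx⟩
  set u := sSup A with hu
  have hune : A.Nonempty := ⟨x1, hx1A⟩
  have hu_le : u ≤ x2 := csSup_le hune hbdd
  have hx1u : x1 ≤ u := le_csSup hbdd' hx1A
  have huI : u ∈ I := hOC x2 hx2I u (le_trans (hnn x1 hx1I) hx1u) hu_le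
  rcases lt_trichotomy (s u) y with hlt | heq | hgt
  · obtain ⟨v, ⟨hva, hvb⟩, x, hxI, rfl⟩ :
        ∃ v, (v ∈ Set.Ioo (y - (y - s u)) y) ∧ ∃ x ∈ I, s x = v := by
      obtain ⟨v, hv1, x, hxI, hx⟩ := hl (y - s u) (by linarith)
      exact ⟨v, hv1, x, hxI, hx⟩
    have hxA : x ∈ A := ⟨hxI, hvb⟩
    have : x ≤ u := le_csSup hbdd' hxA
    have : s x ≤ s u := hmono.monotoneOn hxI huI this
    simp only [sub_sub_cancel] at hva
    linarith
  · exact hy ⟨u, huI, heq⟩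
  · obtain ⟨v, ⟨hva, hvb⟩, x, hxI, rfl⟩ :
        ∃ v, (v ∈ Set.Ioo y (y + (s u - y))) ∧ ∃ x ∈ I, s x = v := by
      obtain ⟨v, hv1, x, hxI, hx⟩ := hr (s u - y) (by linarith)
      exact ⟨v, hv1, x, hxI, hx⟩
    have hxu : x < u := by
      by_contra h
      push_neg at h
      exact absurd (hmono.monotoneOn huI hxI h) (not_le.mpr (by linarith))
    obtain ⟨a, haA, hxa⟩ := exists_lt_of_lt_csSup hune hxu
    have : s x < s a := hmono hxI haA.1 hxa
    linarith [haA.2]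

theorem stmt12 (r : EReal) (hr : 0 < r) (I : Set ℝ)
    (hI : I = Ilt r ∨ ∃ rr : ℝ, r = (rr : EReal) ∧ I = Set.Icc 0 rr)
    (s : ℝ → ℝ) (hmono : StrictMonoOn s I) (hs0 : s 0 = 0)
    (hs0p : Filter.Tendsto s (nhdsWithin 0 (Set.Ioi 0)) (nhds 0))
    (hslt : ∀ x ∈ Ilt r, ((s x : ℝ) : EReal) < rhat s r)
    (hsr : ∀ rr : ℝ, r = (rr : EReal) → rr ∈ I → ((s rr : ℝ) : EReal) = rhat s r)
    (hmeas : Measurable s)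
    (m : Measure ℝ) (hmI : m Iᶜ = 0)
    (hfin : ∀ x ∈ I, m (Set.Icc 0 x) < ⊤)
    (hm0 : m ({0} : Set ℝ) = 0)
    (hmpos1 : ∀ x ∈ I, x ≠ 0 → 0 < m (Set.Ioc 0 x))
    (hmpos2 : ∀ c : ℝ, 0 < c → (c : EReal) < r → 0 < m {y : ℝ | c < y ∧ (y : EReal) < r}) :
    m (Fsupp m I \ Fdot m I s r) = 0 ∧
    Measure.map s m (Fhatsupp m I s r \ (s '' Fdot m I s r)) = 0 ∧
    Fsupp m I = closure (Fdot m I s r) ∩ I ∧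
    Fhatsupp m I s r =
      {xh : ℝ | xh ∈ closure (s '' Fdot m I s r) ∧ (xh : EReal) ∈ Ihat s I r} := by
  -- interval structure facts
  have hnn : ∀ a ∈ I, 0 ≤ a := by
    rcases hI with hI | ⟨rr, hrr, hI⟩ <;> intro a ha <;> rw [hI] at ha
    · exact ha.1
    · exact ha.1
  have hOC : ∀ a ∈ I, ∀ b : ℝ, 0 ≤ b → b ≤ a → b ∈ I := by
    rcases hI with hI | ⟨rr, hrr, hI⟩ <;> intro a ha b hb0 hba <;> rw [hI] at ha ⊢
    · exact ⟨hb0, lt_of_le_of_lt (EReal.coe_le_coe_iff.mpr hba) ha.2⟩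
    · exact ⟨hb0, le_trans hba ha.2⟩
  set mh := Measure.map s m with hmh
  -- m A ≤ m (A ∩ I)
  have hmI' : ∀ A : Set ℝ, m A ≤ m (A ∩ I) := by
    intro A
    calc m A = m ((A ∩ I) ∪ (A \ I)) := by rw [Set.inter_union_diff]
    _ ≤ m (A ∩ I) + m (A \ I) := measure_union_le _ _
    _ ≤ m (A ∩ I) + m Iᶜ := by
        exact add_le_add le_rfl (measure_mono (fun z hz => hz.2))
    _ = m (A ∩ I) := by rw [hmI, add_zero]
  -- s x ∈ Ihat for x ∈ I
  have hIhat : ∀ x ∈ I, ((s x : ℝ) : EReal) ∈ Ihat s I r := by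
    intro x hx
    unfold Ihat
    rcases hI with hIl | ⟨rr, hrr, hIcc⟩
    · rw [if_neg]
      · refine ⟨subset_closure ⟨x, hx, rfl⟩, ?_⟩
        simp only [Set.mem_singleton_iff]
        exact (hslt x (hIl ▸ hx)).ne
      · rintro ⟨rr, hrr, hrrI⟩
        rw [hIl] at hrrI
        exact absurd (hrr ▸ hrrI.2) (lt_irrefl _)
    · rw [if_pos]
      · exact subset_closure ⟨x, hx, rfl⟩
      · refine ⟨rr, hrr.symm, ?_⟩
        rw [hIcc]
        refine ⟨?_, le_refl rr⟩
        have : (0 : EReal) < (rr : EReal) := hrr ▸ hr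
        exact_mod_cast this.le
  -- L3 : outside the support of m, images have null mh-neighbourhoods
  have hL3 : ∀ x ∈ I, ∀ ε : ℝ, 0 < ε → m (Set.Ioo (x-ε) (x+ε) ∩ I) = 0 →
      ∃ δ : ℝ, 0 < δ ∧ mh (Set.Ioo (s x - δ) (s x + δ)) = 0 := by
    intro x hx ε hε h0
    set δL := if 0 ≤ x - ε then s x - s (x-ε) else 1 with hδL
    set δR := if x + ε ∈ I then s (x+ε) - s x else 1 with hδR
    have hδLpos : 0 < δL := by
      rw [hδL]; split_ifs with h
      · exact sub_pos.mpr (hmono (hOC x hx _ h (by linarith)) hx (by linarith))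
      · exact one_pos
    have hδRpos : 0 < δR := by
      rw [hδR]; split_ifs with h
      · exact sub_pos.mpr (hmono hx h (by linarith))
      · exact one_pos
    refine ⟨min δL δR, lt_min hδLpos hδRpos, ?_⟩
    have hsub : s ⁻¹' (Set.Ioo (s x - min δL δR) (s x + min δL δR)) ∩ I ⊆
        Set.Ioo (x-ε) (x+ε) ∩ I := by
      rintro y ⟨hy1, hy2⟩
      simp only [Set.mem_preimage, Set.mem_Ioo] at hy1
      refine ⟨⟨?_, ?_⟩, hy2⟩
      · by_contra h
        push_neg at h
        have hxe : 0 ≤ x - ε := le_trans (hnn y hy2) h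
        have h1 : s y ≤ s (x - ε) :=
          hmono.monotoneOn hy2 (hOC x hx _ hxe (by linarith)) h
        have h2 : δL = s x - s (x - ε) := if_pos hxe
        have := min_le_left δL δR
        linarith [hy1.1]
      · by_contra h
        push_neg at h
        have hxe : x + ε ∈ I := hOC y hy2 _ (by linarith [hnn x hx]) h
        have h1 : s (x + ε) ≤ s y := hmono.monotoneOn hxe hy2 h
        have h2 : δR = s (x+ε) - s x := if_pos hxe
        have := min_le_right δL δR
        linarith [hy1.2]
    rw [hmh, Measure.map_apply hmeas measurableSet_Ioo]
    refine le_antisymm (le_trans (hmI' _) ?_) (zero_le)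
    rw [← h0]
    exact measure_mono hsub
  -- null cover for m on I, and for mh
  obtain ⟨U, hUm, hU0, hUmem⟩ := nullCover m I
  obtain ⟨V, hVm, hV0, hVmem⟩ := nullCover mh Set.univ
  rw [Set.inter_univ] at hV0
  have hVmem' : ∀ y : ℝ, ∀ ε : ℝ, 0 < ε → mh (Set.Ioo (y-ε) (y+ε)) = 0 → y ∈ V := by
    intro y ε hε h0
    exact hVmem y ε hε (by rwa [Set.inter_univ])
  have hVpre : m (s ⁻¹' V) = 0 := by
    rw [hmh, Measure.map_apply hmeas hVm] at hV0
    exact hV0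
  -- m (I \ F) = 0
  have hIFnull : m (I \ Fsupp m I) = 0 := by
    refine measure_mono_null ?_ hU0
    rintro x ⟨hxI, hxF⟩
    have : ¬ (∀ ε : ℝ, 0 < ε → 0 < m (Set.Ioo (x - ε) (x + ε) ∩ I)) := by
      intro hc; exact hxF ⟨hxI, hc⟩
    push_neg at this
    obtain ⟨ε, hε, h0⟩ := this
    exact ⟨hUmem x ε hε (le_antisymm (le_of_not_gt (by simpa using h0)) (zero_le)), hxI⟩
  -- Part 1
  have hFdiffV : Fsupp m I \ Fdot m I s r ⊆ s ⁻¹' V := by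
    rintro x ⟨hxF, hxD⟩
    have hxI := hxF.1
    have : ¬ s x ∈ Fhatsupp m I s r := fun hc => hxD ⟨hxF, hc⟩
    have h2 : ¬ (∀ ε : ℝ, 0 < ε → 0 < mh (Set.Ioo (s x - ε) (s x + ε))) := by
      intro hc; exact this ⟨hIhat x hxI, hc⟩
    push_neg at h2
    obtain ⟨ε, hε, h0⟩ := h2
    exact hVmem' (s x) ε hε (le_antisymm (le_of_not_gt (by simpa using h0)) (zero_le))
  have part1 : m (Fsupp m I \ Fdot m I s r) = 0 :=
    measure_mono_null hFdiffV hVpre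
  -- the exceptional set Ê
  set S := s '' I with hS
  have hSim : sImage s I = (fun t : ℝ => (t : EReal)) '' S := by
    rw [hS, sImage, Set.image_image]
  have hclosure : ∀ y : ℝ, (y : EReal) ∈ closure (sImage s I) → y ∈ closure S := by
    intro y hy
    rw [hSim] at hy
    rwa [EReal.isEmbedding_coe.closure_eq_preimage_closure_image S]
  set Ehat := {y : ℝ | (y : EReal) ∈ closure (sImage s I) ∧ y ∉ S} with hEhat
  have hEcount : Ehat.Countable := by
    refine Set.Countable.mono ?_ ((countable_rgap S).union (countable_lgap S))
    rintro y ⟨hyc, hyS⟩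
    have hycl : y ∈ closure S := hclosure y hyc
    by_contra hy
    simp only [Set.mem_union, Set.mem_setOf_eq, not_or, not_and, not_exists] at hy
    obtain ⟨hyr, hyl⟩ := hy
    have hr' : ∀ ε : ℝ, 0 < ε → (Set.Ioo y (y+ε) ∩ S).Nonempty := by
      intro ε hε
      rcases Set.eq_empty_or_nonempty (Set.Ioo y (y+ε) ∩ S) with h | h
      · exact absurd h (by have := hyr hycl ε; tauto)
      · exact h
    have hl' : ∀ ε : ℝ, 0 < ε → (Set.Ioo (y-ε) y ∩ S).Nonempty := by
      intro ε hε
      rcases Set.eq_empty_or_nonempty (Set.Ioo (y-ε) y ∩ S) with h | h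
      · exact absurd h (by have := hyl hycl ε; tauto)
      · exact h
    exact no_two_sided I s hmono hOC hnn y hyS hl' hr'
  have hEnull : mh Ehat = 0 := by
    have hE : Ehat = ⋃ y ∈ Ehat, {y} := (Set.biUnion_of_singleton Ehat).symm
    rw [hE, measure_biUnion_null_iff hEcount]
    intro y hy
    rw [hmh, Measure.map_apply hmeas (measurableSet_singleton y)]
    refine le_antisymm (le_trans (hmI' _) ?_) (zero_le)
    have : s ⁻¹' {y} ∩ I = ∅ := by
      ext z
      simp only [Set.mem_inter_iff, Set.mem_preimage, Set.mem_singleton_iff,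
        Set.mem_empty_iff_false, iff_false, not_and]
      intro hz hzI
      exact hy.2 ⟨z, hzI, hz⟩
    rw [this, measure_empty]
  -- Part 2
  have hIhatSub : Ihat s I r ⊆ closure (sImage s I) := by
    unfold Ihat
    split_ifs
    · exact subset_refl _
    · exact Set.diff_subset
  have hFhatSub : Fhatsupp m I s r \ (s '' Fdot m I s r) ⊆ Ehat := by
    rintro y ⟨hyF, hyD⟩
    refine ⟨hIhatSub hyF.1, ?_⟩
    rintro ⟨x, hxI, rfl⟩
    have hxF : x ∈ Fsupp m I := by
      refine ⟨hxI, ?_⟩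
      by_contra hc
      push_neg at hc
      obtain ⟨ε, hε, h0⟩ := hc
      obtain ⟨δ, hδ, h1⟩ := hL3 x hxI ε hε
        (le_antisymm (le_of_not_gt (by simpa using h0)) (zero_le))
      exact absurd (hyF.2 δ hδ) (by rw [h1]; exact lt_irrefl 0)
    exact hyD ⟨x, ⟨hxF, hyF⟩, rfl⟩
  have part2 : mh (Fhatsupp m I s r \ (s '' Fdot m I s r)) = 0 :=
    measure_mono_null hFhatSub hEnull
  -- Part 3
  have hIDnull : m (I \ Fdot m I s r) = 0 := by
    refine measure_mono_null ?_ (measure_union_null hIFnull part1)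
    rintro z ⟨hzI, hzD⟩
    by_cases hzF : z ∈ Fsupp m I
    · exact Or.inr ⟨hzF, hzD⟩
    · exact Or.inl ⟨hzI, hzF⟩
  have part3 : Fsupp m I = closure (Fdot m I s r) ∩ I := by
    ext x
    constructor
    · rintro ⟨hxI, hpos⟩
      refine ⟨?_, hxI⟩
      rw [Metric.mem_closure_iff]
      intro ε hε
      have h1 := hpos ε hε
      have h2 : 0 < m (Set.Ioo (x-ε) (x+ε) ∩ I ∩ Fdot m I s r) := by
        by_contra h
        push_neg at h
        have h' : m (Set.Ioo (x-ε) (x+ε) ∩ I ∩ Fdot m I s r) = 0 :=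
          le_antisymm h (zero_le)
        have hd : m ((Set.Ioo (x-ε) (x+ε) ∩ I) \ Fdot m I s r) = 0 :=
          measure_mono_null (by rintro z ⟨⟨_, hzI⟩, hzD⟩; exact ⟨hzI, hzD⟩) hIDnull
        have hle := measure_le_inter_add_diff m (Set.Ioo (x-ε) (x+ε) ∩ I) (Fdot m I s r)
        rw [h', hd, add_zero] at hle
        exact absurd (le_antisymm hle (zero_le)) (ne_of_gt h1)
      obtain ⟨z, hz⟩ := nonempty_of_measure_ne_zero (ne_of_gt h2)
      refine ⟨z, hz.2, ?_⟩
      rw [Real.dist_eq, abs_lt]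
      obtain ⟨⟨hz1, hz2⟩, _⟩ := hz.1
      constructor <;> linarith
    · rintro ⟨hxc, hxI⟩
      refine ⟨hxI, fun ε hε => ?_⟩
      rw [Metric.mem_closure_iff] at hxc
      obtain ⟨z, hzD, hdist⟩ := hxc ε hε
      have hzF := hzD.1
      have hdnn : (0:ℝ) ≤ dist x z := dist_nonneg
      have h := hzF.2 (ε - dist x z) (by linarith)
      refine lt_of_lt_of_le h (measure_mono ?_)
      rintro w ⟨⟨hw1, hw2⟩, hwI⟩
      have hde : dist x z = |x - z| := Real.dist_eq x z
      have ha1 := le_abs_self (x - z)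
      have ha2 := neg_abs_le (x - z)
      exact ⟨⟨by linarith, by linarith⟩, hwI⟩
  -- Part 4
  have hAhatnull : mh {y : ℝ | (y:EReal) ∉ Ihat s I r} = 0 := by
    have hms : MeasurableSet {y : ℝ | (y:EReal) ∈ Ihat s I r} := by
      have he : {y : ℝ | (y:EReal) ∈ Ihat s I r} =
          (fun y : ℝ => (y:EReal)) ⁻¹' (Ihat s I r) := rfl
      rw [he]
      apply measurable_coe_real_ereal
      unfold Ihat
      split_ifs
      · exact isClosed_closure.measurableSet
      · exact isClosed_closure.measurableSet.diff (measurableSet_singleton _)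
    have hms' : MeasurableSet {y : ℝ | (y:EReal) ∉ Ihat s I r} := by
      have he : {y : ℝ | (y:EReal) ∉ Ihat s I r} = {y : ℝ | (y:EReal) ∈ Ihat s I r}ᶜ := rfl
      rw [he]; exact hms.compl
    rw [hmh, Measure.map_apply hmeas hms']
    refine le_antisymm (le_trans (hmI' _) ?_) (zero_le)
    have he : s ⁻¹' {y : ℝ | (y:EReal) ∉ Ihat s I r} ∩ I = ∅ := by
      ext z
      simp only [Set.mem_inter_iff, Set.mem_preimage, Set.mem_setOf_eq,
        Set.mem_empty_iff_false, iff_false, not_and]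
      intro hz hzI
      exact hz (hIhat z hzI)
    rw [he, measure_empty]
  have hNnull : mh ({y : ℝ | (y:EReal) ∉ Ihat s I r} ∪ V ∪ Ehat) = 0 :=
    measure_union_null (measure_union_null hAhatnull hV0) hEnull
  have hcompN : ∀ y : ℝ, y ∉ s '' Fdot m I s r →
      y ∈ ({y : ℝ | (y:EReal) ∉ Ihat s I r} ∪ V ∪ Ehat) := by
    intro y hy
    by_cases hyF : y ∈ Fhatsupp m I s r
    · exact Or.inr (hFhatSub ⟨hyF, hy⟩)
    · by_cases hyI : (y:EReal) ∈ Ihat s I r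
      · have hc : ¬ ∀ ε : ℝ, 0 < ε → 0 < mh (Set.Ioo (y-ε) (y+ε)) :=
          fun hc => hyF ⟨hyI, hc⟩
        push_neg at hc
        obtain ⟨ε, hε, h0⟩ := hc
        exact Or.inl (Or.inr (hVmem' y ε hε (le_antisymm h0 (zero_le))))
      · exact Or.inl (Or.inl hyI)
  have part4 : Fhatsupp m I s r =
      {xh : ℝ | xh ∈ closure (s '' Fdot m I s r) ∧ (xh : EReal) ∈ Ihat s I r} := by
    ext y
    simp only [Set.mem_setOf_eq]
    constructor
    · rintro ⟨hyI, hpos⟩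
      refine ⟨?_, hyI⟩
      rw [Metric.mem_closure_iff]
      intro ε hε
      have h1 := hpos ε hε
      have h2 : 0 < mh (Set.Ioo (y-ε) (y+ε) ∩ (s '' Fdot m I s r)) := by
        by_contra h
        push_neg at h
        have h' : mh (Set.Ioo (y-ε) (y+ε) ∩ (s '' Fdot m I s r)) = 0 :=
          le_antisymm h (zero_le)
        have hd : mh (Set.Ioo (y-ε) (y+ε) \ (s '' Fdot m I s r)) = 0 :=
          measure_mono_null (fun z hz => hcompN z hz.2) hNnull
        have hle := measure_le_inter_add_diff mh (Set.Ioo (y-ε) (y+ε)) (s '' Fdot m I s r)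
        rw [h', hd, add_zero] at hle
        exact absurd (le_antisymm hle (zero_le)) (ne_of_gt h1)
      obtain ⟨z, hz⟩ := nonempty_of_measure_ne_zero (ne_of_gt h2)
      refine ⟨z, hz.2, ?_⟩
      rw [Real.dist_eq, abs_lt]
      obtain ⟨hz1, hz2⟩ := hz.1
      constructor <;> linarith
    · rintro ⟨hyc, hyI⟩
      refine ⟨hyI, fun ε hε => ?_⟩
      rw [Metric.mem_closure_iff] at hyc
      obtain ⟨z, hzD, hdist⟩ := hyc ε hε
      obtain ⟨w, hwD, rfl⟩ := hzD
      have hdnn : (0:ℝ) ≤ dist y (s w) := dist_nonneg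
      have h := hwD.2.2 (ε - dist y (s w)) (by linarith)
      refine lt_of_lt_of_le h (measure_mono ?_)
      rintro v ⟨hv1, hv2⟩
      have hde : dist y (s w) = |y - s w| := Real.dist_eq y (s w)
      have ha1 := le_abs_self (y - s w)
      have ha2 := neg_abs_le (y - s w)
      exact ⟨by linarith, by linarith⟩
  exact ⟨part1, part2, part3, part4⟩
end

section
/- Let A ⊆ ℝ, let B ⊆ ℝ be closed in ℝ, and let φ : A → B be strictly increasing and surjective. Then φ is continuous (as a map between the subspaces A and B of ℝ). -/
theorem stmt15 (A B : Set ℝ) (hB : IsClosed B) (φ : A → B)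
    (hmono : StrictMono φ) (hsurj : Function.Surjective φ) :
    Continuous φ := by
  rw [continuous_iff_continuousAt]
  intro a
  rw [ContinuousAt, tendsto_subtype_rng, tendsto_order]
  constructor
  · -- lower side: b < φ a, eventually b < φ x
    intro b hb
    by_cases hS : (B ∩ Set.Ico b (φ a : ℝ)).Nonempty
    · obtain ⟨y, hyB, hy1, hy2⟩ := hS
      obtain ⟨c, hc⟩ := hsurj ⟨y, hyB⟩
      have hca : c < a := by
        have : φ c < φ a := by
          rw [← Subtype.coe_lt_coe]
          simpa [hc] using hy2
        exact hmono.lt_iff_lt.mp this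
      have hmem : {x : A | c < x} ∈ nhds a := by
        have : IsOpen {x : A | c < x} := by
          have : {x : A | c < x} = Subtype.val ⁻¹' Set.Ioi (c : ℝ) := by
            ext x; simp [← Subtype.coe_lt_coe]
          rw [this]
          exact isOpen_Ioi.preimage continuous_subtype_val
        exact this.mem_nhds hca
      filter_upwards [hmem] with x hx
      have : φ c < φ x := hmono hx
      rw [← Subtype.coe_lt_coe] at this
      calc b ≤ y := hy1
        _ = (φ c : ℝ) := by rw [hc]
        _ < (φ x : ℝ) := this
    · rcases (B ∩ Set.Iic b).eq_empty_or_nonempty with hS0 | hS0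
      · refine Filter.Eventually.of_forall fun x => ?_
        by_contra h
        push_neg at h
        exact Set.eq_empty_iff_forall_notMem.mp hS0 (φ x : ℝ) ⟨(φ x).2, h⟩
      · have hclosed : IsClosed (B ∩ Set.Iic b) := hB.inter isClosed_Iic
        have hbdd : BddAbove (B ∩ Set.Iic b) := ⟨b, fun y hy => hy.2⟩
        set t := sSup (B ∩ Set.Iic b) with ht
        have htmem : t ∈ B ∩ Set.Iic b := hclosed.csSup_mem hS0 hbdd
        obtain ⟨c, hc⟩ := hsurj ⟨t, htmem.1⟩
        have htb : t ≤ b := htmem.2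
        have hca : c < a := by
          have : φ c < φ a := by
            rw [← Subtype.coe_lt_coe, hc]
            exact lt_of_le_of_lt htb hb
          exact hmono.lt_iff_lt.mp this
        have hmem : {x : A | c < x} ∈ nhds a := by
          have : IsOpen {x : A | c < x} := by
            have : {x : A | c < x} = Subtype.val ⁻¹' Set.Ioi (c : ℝ) := by
              ext x; simp [← Subtype.coe_lt_coe]
            rw [this]
            exact isOpen_Ioi.preimage continuous_subtype_val
          exact this.mem_nhds hca
        filter_upwards [hmem] with x hx
        -- show b < φ x; suppose φ x ≤ b. Then φ x ∈ B ∩ Iic b, so φ x ≤ t = φ c, so x ≤ c, contra hx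
        by_contra h
        push_neg at h
        have hxle : (φ x : ℝ) ≤ t := le_csSup hbdd ⟨(φ x).2, h⟩
        have : φ x ≤ φ c := by
          rw [← Subtype.coe_le_coe, hc]; exact hxle
        exact absurd (hmono.le_iff_le.mp this) (not_le.mpr hx)
  · -- upper side: φ a < b, eventually φ x < b
    intro b hb
    by_cases hS : (B ∩ Set.Ioc (φ a : ℝ) b).Nonempty
    · obtain ⟨y, hyB, hy1, hy2⟩ := hS
      obtain ⟨c, hc⟩ := hsurj ⟨y, hyB⟩
      have hac : a < c := by
        have : φ a < φ c := by
          rw [← Subtype.coe_lt_coe, hc]; exact hy1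
        exact hmono.lt_iff_lt.mp this
      have hmem : {x : A | x < c} ∈ nhds a := by
        have : IsOpen {x : A | x < c} := by
          have : {x : A | x < c} = Subtype.val ⁻¹' Set.Iio (c : ℝ) := by
            ext x; simp [← Subtype.coe_lt_coe]
          rw [this]
          exact isOpen_Iio.preimage continuous_subtype_val
        exact this.mem_nhds hac
      filter_upwards [hmem] with x hx
      have : φ x < φ c := hmono hx
      rw [← Subtype.coe_lt_coe] at this
      calc (φ x : ℝ) < (φ c : ℝ) := this
        _ = y := by rw [hc]
        _ ≤ b := hy2
    · rcases (B ∩ Set.Ici b).eq_empty_or_nonempty with hS0 | hS0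
      · refine Filter.Eventually.of_forall fun x => ?_
        by_contra h
        push_neg at h
        exact Set.eq_empty_iff_forall_notMem.mp hS0 (φ x : ℝ) ⟨(φ x).2, h⟩
      · have hclosed : IsClosed (B ∩ Set.Ici b) := hB.inter isClosed_Ici
        have hbdd : BddBelow (B ∩ Set.Ici b) := ⟨b, fun y hy => hy.2⟩
        set t := sInf (B ∩ Set.Ici b) with ht
        have htmem : t ∈ B ∩ Set.Ici b := hclosed.csInf_mem hS0 hbdd
        obtain ⟨c, hc⟩ := hsurj ⟨t, htmem.1⟩
        have htb : b ≤ t := htmem.2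
        have hac : a < c := by
          have : φ a < φ c := by
            rw [← Subtype.coe_lt_coe, hc]
            exact lt_of_lt_of_le hb htb
          exact hmono.lt_iff_lt.mp this
        have hmem : {x : A | x < c} ∈ nhds a := by
          have : IsOpen {x : A | x < c} := by
            have : {x : A | x < c} = Subtype.val ⁻¹' Set.Iio (c : ℝ) := by
              ext x; simp [← Subtype.coe_lt_coe]
            rw [this]
            exact isOpen_Iio.preimage continuous_subtype_val
          exact this.mem_nhds hac
        filter_upwards [hmem] with x hx
        by_contra h
        push_neg at h
        have hxle : t ≤ (φ x : ℝ) := csInf_le hbdd ⟨(φ x).2, h⟩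
        have : φ c ≤ φ x := by
          rw [← Subtype.coe_le_coe, hc]; exact hxle
        exact absurd (hmono.le_iff_le.mp this) (not_le.mpr hx)
end

section
/- The function u⁺ is positive and strictly decreasing on ℝ, and it solves the pair-(s,m) equation with parameters a = 1/β + 2/κ and b = −1; that is, for all x ∈ ℝ, u⁺(x) = (1/β + 2/κ) − s(x) + 2α ∫_0^x (s(x)−s(y)) u⁺(y) dy. -/
open MeasureTheory Real

/-- The discontinuous scale function of the snapping out Brownian motion:
`s(x) = x` for `x < 0` and `s(x) = x + 2/κ` for `x ≥ 0`. -/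
noncomputable def sfun (κ : ℝ) (x : ℝ) : ℝ := if x < 0 then x else x + 2 / κ

/-- `u⁺(x) = e^{−βx}/β + (e^{βx} + e^{−βx})/κ` for `x < 0`, and `u⁺(x) = e^{−βx}/β`
for `x ≥ 0`, where `β = √(2α)`. -/
noncomputable def upfun (α κ : ℝ) (x : ℝ) : ℝ :=
  if x < 0 then
    Real.exp (-(Real.sqrt (2 * α)) * x) / Real.sqrt (2 * α) +
      (Real.exp (Real.sqrt (2 * α) * x) + Real.exp (-(Real.sqrt (2 * α)) * x)) / κ
  else Real.exp (-(Real.sqrt (2 * α)) * x) / Real.sqrt (2 * α)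

/-!
Between 0 and x the scale function never crosses its jump, so `s(x) - s(y) = x - y` there, and
on each half-line `u⁺` is a combination `A e^{-βy} + B e^{βy}`. The integral is then elementary,
`∫_0^x (x - y) e^{cy} dy = (e^{cx} - 1 - cx)/c²`, and `β² = 2α` reduces the equation to an identity
of coefficients. Monotonicity: `u⁺` is the strictly decreasing `e^{-βx}/β` plus
`2 cosh(βx)/κ` on `x < 0` (and `0` on `x ≥ 0`), which is nonnegative and decreasing.
-/

theorem integral_sub_mul_exp (c x : ℝ) (hc : c ≠ 0) :
    ∫ y in (0 : ℝ)..x, (x - y) * exp (c * y) = (exp (c * x) - 1 - c * x) / c ^ 2 := by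
  have hderiv : ∀ y ∈ Set.uIcc (0 : ℝ) x,
      HasDerivAt (fun y => exp (c * y) * ((x - y) / c + 1 / c ^ 2))
        ((x - y) * exp (c * y)) y := by
    intro y _
    have hexp : HasDerivAt (fun y => exp (c * y)) (exp (c * y) * c) y :=
      ((hasDerivAt_id y).const_mul c).exp.congr_deriv (by simp)
    have hlin : HasDerivAt (fun y => (x - y) / c + 1 / c ^ 2) (-1 / c) y :=
      (((hasDerivAt_id y).const_sub x).div_const c).add_const _
    refine (hexp.mul hlin).congr_deriv ?_
    field_simp
    ring
  have hint : IntervalIntegrable (fun y => (x - y) * exp (c * y)) volume 0 x :=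
    (by fun_prop : Continuous fun y => (x - y) * exp (c * y)).intervalIntegrable _ _
  rw [intervalIntegral.integral_eq_sub_of_hasDerivAt hderiv hint]
  field_simp
  simp only [sub_self, mul_zero, zero_add, mul_one, exp_zero, sub_zero, one_mul]
  ring

theorem integral_sub_mul_exp_add_exp (c A B x : ℝ) (hc : c ≠ 0) :
    ∫ y in (0 : ℝ)..x, (x - y) * (A * exp (-c * y) + B * exp (c * y)) =
      (A * (exp (-c * x) - 1 + c * x) + B * (exp (c * x) - 1 - c * x)) / c ^ 2 := by
  have hint (d e : ℝ) : IntervalIntegrable (fun y => d * ((x - y) * exp (e * y))) volume 0 x :=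
    (by fun_prop : Continuous fun y => d * ((x - y) * exp (e * y))).intervalIntegrable _ _
  simp only [mul_add, mul_left_comm (x - _)]
  rw [intervalIntegral.integral_add (hint A _) (hint B _), intervalIntegral.integral_const_mul,
    intervalIntegral.integral_const_mul, integral_sub_mul_exp _ _ (neg_ne_zero.2 hc),
    integral_sub_mul_exp _ _ hc]
  ring

theorem integral_sfun_sub_mul_upfun_of_neg (α κ : ℝ) {x : ℝ} (hx : x < 0) :
    ∫ y in (0 : ℝ)..x, (sfun κ x - sfun κ y) * upfun α κ y =
      ∫ y in (0 : ℝ)..x, (x - y) *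
        ((1 / √(2 * α) + 1 / κ) * exp (-√(2 * α) * y) + 1 / κ * exp (√(2 * α) * y)) := by
  refine intervalIntegral.integral_congr_ae ?_
  filter_upwards [volume.ae_ne 0] with y hy0 hy
  rw [Set.uIoc_of_ge hx.le] at hy
  have hy_neg : y < 0 := lt_of_le_of_ne hy.2 hy0
  simp only [sfun, upfun, if_pos hx, if_pos hy_neg]
  ring

theorem integral_sfun_sub_mul_upfun_of_nonneg (α κ : ℝ) {x : ℝ} (hx : 0 ≤ x) :
    ∫ y in (0 : ℝ)..x, (sfun κ x - sfun κ y) * upfun α κ y =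
      ∫ y in (0 : ℝ)..x, (x - y) *
        (1 / √(2 * α) * exp (-√(2 * α) * y) + 0 * exp (√(2 * α) * y)) := by
  refine intervalIntegral.integral_congr fun y hy => ?_
  rw [Set.uIcc_of_le hx] at hy
  simp only [sfun, upfun, if_neg hx.not_gt, if_neg hy.1.not_gt]
  ring

theorem upfun_eq_add_ite (α κ : ℝ) :
    upfun α κ = fun x => exp (-√(2 * α) * x) / √(2 * α) +
      if x < 0 then (exp (√(2 * α) * x) + exp (-√(2 * α) * x)) / κ else 0 := by
  ext x
  unfold upfun
  split_ifs <;> simp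

theorem antitone_ite_neg_exp_add_exp (c : ℝ) {κ : ℝ} (hκ : 0 ≤ κ) :
    Antitone fun x => if x < 0 then (exp (c * x) + exp (-c * x)) / κ else 0 := by
  intro x y hxy
  have hcosh (z : ℝ) : exp (c * z) + exp (-c * z) = 2 * cosh (c * z) := by
    rw [cosh_eq]; ring_nf
  dsimp only
  split_ifs with hy hx hx
  · rw [hcosh, hcosh]
    gcongr
    rw [cosh_le_cosh, abs_mul, abs_mul, abs_of_neg hy, abs_of_neg hx]
    gcongr
  · exact absurd (hxy.trans_lt hy) hx
  · positivity
  · rfl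

theorem upfun_pos (α κ : ℝ) (hα : 0 < α) (hκ : 0 < κ) (x : ℝ) : 0 < upfun α κ x := by
  unfold upfun
  split_ifs <;> positivity

theorem upfun_strictAnti (α κ : ℝ) (hα : 0 < α) (hκ : 0 ≤ κ) : StrictAnti (upfun α κ) := by
  rw [upfun_eq_add_ite]
  refine StrictAnti.add_antitone ?_ (antitone_ite_neg_exp_add_exp _ hκ)
  intro x y hxy
  dsimp only
  rw [neg_mul, neg_mul]
  gcongr

theorem stmt17 (α κ : ℝ) (hα : 0 < α) (hκ : 0 < κ) :
    (∀ x : ℝ, 0 < upfun α κ x) ∧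
    StrictAnti (upfun α κ) ∧
    (∀ x : ℝ, upfun α κ x =
      (1 / Real.sqrt (2 * α) + 2 / κ) - sfun κ x +
        2 * α * ∫ y in (0 : ℝ)..x, (sfun κ x - sfun κ y) * upfun α κ y) := by
  have hβ : 0 < √(2 * α) := by positivity
  have hβ_sq : √(2 * α) ^ 2 = 2 * α := sq_sqrt (by positivity)
  refine ⟨upfun_pos α κ hα hκ, upfun_strictAnti α κ hα hκ.le, fun x => ?_⟩
  rcases lt_or_ge x 0 with hx | hx
  · rw [integral_sfun_sub_mul_upfun_of_neg α κ hx, integral_sub_mul_exp_add_exp _ _ _ _ hβ.ne',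
      hβ_sq]
    simp only [upfun, sfun, if_pos hx]
    field_simp
    ring
  · rw [integral_sfun_sub_mul_upfun_of_nonneg α κ hx, integral_sub_mul_exp_add_exp _ _ _ _ hβ.ne',
      hβ_sq]
    simp only [upfun, sfun, if_neg hx.not_gt]
    field_simp
    ring
end

section
/- The function u⁻ is positive and strictly increasing on ℝ and solves the pair-(s,m) equation with parameters a = 1/β and b = 1; that is, for all x ∈ ℝ, u⁻(x) = 1/β + s(x) + 2α ∫_0^x (s(x)−s(y)) u⁻(y) dy. Moreover, the Wronskian is constant: for every x ∈ ℝ, D⁺u⁻(x)·u⁺(x) − D⁺u⁺(x)·u⁻(x) = 2/β + 2/κ, where D⁺f denotes the right derivative (which for x ≠ 0 coincides with the ordinary derivative). -/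
open MeasureTheory Real

/-- `u⁻(x) = e^{βx}/β` for `x < 0`, and `u⁻(x) = e^{βx}/β + (e^{βx} + e^{−βx})/κ`
for `x ≥ 0`, where `β = √(2α)`. -/
noncomputable def umfun (α κ : ℝ) (x : ℝ) : ℝ :=
  if x < 0 then Real.exp (Real.sqrt (2 * α) * x) / Real.sqrt (2 * α)
  else
    Real.exp (Real.sqrt (2 * α) * x) / Real.sqrt (2 * α) +
      (Real.exp (Real.sqrt (2 * α) * x) + Real.exp (-(Real.sqrt (2 * α)) * x)) / κ

lemma key_int (b x p q : ℝ) (hb : b ≠ 0) :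
    ∫ y in (0:ℝ)..x, (x - y) * (p * Real.exp (b*y) + q * Real.exp (-(b*y))) =
      p * (Real.exp (b*x) - 1 - b*x) / b^2 + q * (Real.exp (-(b*x)) - 1 + b*x) / b^2 := by
  have h : ∀ y ∈ Set.uIcc (0:ℝ) x, HasDerivAt
      (fun y => p * (((x - y)/b + 1/b^2) * Real.exp (b*y))
        + q * ((-(x - y)/b + 1/b^2) * Real.exp (-(b*y))))
      ((x - y) * (p * Real.exp (b*y) + q * Real.exp (-(b*y)))) y := by
    intro y _
    have hmul : HasDerivAt (fun y : ℝ => b*y) b y := by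
      simpa using (hasDerivAt_id y).const_mul b
    have ep : HasDerivAt (fun y => Real.exp (b*y)) (Real.exp (b*y) * b) y := hmul.exp
    have em : HasDerivAt (fun y => Real.exp (-(b*y))) (Real.exp (-(b*y)) * (-b)) y :=
      hmul.neg.exp
    have l1 : HasDerivAt (fun y : ℝ => (x - y)/b + 1/b^2) (-1/b) y :=
      (((hasDerivAt_id y).const_sub x).div_const b).add_const (1/b^2)
    have l2 : HasDerivAt (fun y : ℝ => -(x - y)/b + 1/b^2) (- -1/b) y :=
      ((((hasDerivAt_id y).const_sub x).neg).div_const b).add_const (1/b^2)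
    have := ((l1.mul ep).const_mul p).add ((l2.mul em).const_mul q)
    refine this.congr_deriv ?_
    field_simp
    ring
  have hint : IntervalIntegrable
      (fun y => (x - y) * (p * Real.exp (b*y) + q * Real.exp (-(b*y)))) volume 0 x := by
    apply Continuous.intervalIntegrable
    fun_prop
  rw [intervalIntegral.integral_eq_sub_of_hasDerivAt h hint]
  simp only [mul_zero, Real.exp_zero, neg_zero, sub_zero, sub_self, zero_div]
  field_simp
  ring

theorem stmt18 (α κ : ℝ) (hα : 0 < α) (hκ : 0 < κ) :
    (∀ x : ℝ, 0 < umfun α κ x) ∧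
    StrictMono (umfun α κ) ∧
    (∀ x : ℝ, umfun α κ x =
      1 / Real.sqrt (2 * α) + sfun κ x +
        2 * α * ∫ y in (0 : ℝ)..x, (sfun κ x - sfun κ y) * umfun α κ y) ∧
    (∀ x : ℝ, ∃ d₁ d₂ : ℝ,
      HasDerivWithinAt (umfun α κ) d₁ (Set.Ici x) x ∧
      HasDerivWithinAt (upfun α κ) d₂ (Set.Ici x) x ∧
      d₁ * upfun α κ x - d₂ * umfun α κ x = 2 / Real.sqrt (2 * α) + 2 / κ) := by
  set b := Real.sqrt (2*α) with hbdef
  have hb : 0 < b := Real.sqrt_pos.mpr (by linarith)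
  have hb2 : b^2 = 2*α := Real.sq_sqrt (by linarith)
  -- positivity
  have hpos : ∀ x : ℝ, 0 < umfun α κ x := by
    intro x
    rcases lt_or_ge x 0 with h | h
    · simp only [umfun, if_pos h, ← hbdef]
      positivity
    · simp only [umfun, if_neg (not_lt.mpr h), ← hbdef]
      positivity
  -- strict monotonicity
  have hmono : StrictMono (umfun α κ) := by
    intro x y hxy
    rcases lt_or_ge x 0 with hx | hx
    · rcases lt_or_ge y 0 with hy | hy
      · simp only [umfun, if_pos hx, if_pos hy, ← hbdef]
        rw [div_lt_div_iff₀ hb hb]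
        have h1 : Real.exp (b*x) < Real.exp (b*y) := Real.exp_lt_exp.mpr (by nlinarith)
        nlinarith
      · simp only [umfun, if_pos hx, if_neg (not_lt.mpr hy), ← hbdef]
        have h1 : Real.exp (b*x) < 1 := by
          rw [← Real.exp_zero]; exact Real.exp_lt_exp.mpr (by nlinarith)
        have h2 : (1:ℝ) ≤ Real.exp (b*y) := by
          rw [← Real.exp_zero]; exact Real.exp_le_exp.mpr (by nlinarith)
        have h3 : 0 < (Real.exp (b*y) + Real.exp (-b*y))/κ := by positivity
        have h4 : Real.exp (b*x)/b < Real.exp (b*y)/b := by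
          rw [div_lt_div_iff₀ hb hb]; nlinarith
        linarith
    · have hy : ¬ y < 0 := not_lt.mpr (by linarith)
      simp only [umfun, if_neg (not_lt.mpr hx), if_neg hy, neg_mul, Real.exp_neg, ← hbdef]
      have h1 : Real.exp (b*x) < Real.exp (b*y) := Real.exp_lt_exp.mpr (by nlinarith)
      have h2 : (1:ℝ) ≤ Real.exp (b*x) := by
        rw [← Real.exp_zero]; exact Real.exp_le_exp.mpr (by nlinarith)
      have epx := Real.exp_pos (b*x)
      have epy := Real.exp_pos (b*y)
      have key : Real.exp (b*x) + (Real.exp (b*x))⁻¹ ≤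
          Real.exp (b*y) + (Real.exp (b*y))⁻¹ := by
        rw [← sub_nonneg]
        have h : Real.exp (b*y) + (Real.exp (b*y))⁻¹ -
            (Real.exp (b*x) + (Real.exp (b*x))⁻¹) =
            (Real.exp (b*y) - Real.exp (b*x)) * (Real.exp (b*x) * Real.exp (b*y) - 1) /
              (Real.exp (b*x) * Real.exp (b*y)) := by
          field_simp
          ring
        rw [h]
        apply div_nonneg _ (by positivity)
        apply mul_nonneg (by linarith)
        nlinarith
      have h4 : Real.exp (b*x)/b < Real.exp (b*y)/b := by
        rw [div_lt_div_iff₀ hb hb]; nlinarith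
      have h5 : (Real.exp (b*x) + (Real.exp (b*x))⁻¹)/κ ≤
          (Real.exp (b*y) + (Real.exp (b*y))⁻¹)/κ := by gcongr
      linarith
  refine ⟨hpos, hmono, ?_, ?_⟩
  · -- the integral equation
    intro x
    rcases lt_or_ge x 0 with hx | hx
    · have hcong : (∫ y in (0:ℝ)..x, (sfun κ x - sfun κ y) * umfun α κ y) =
          ∫ y in (0:ℝ)..x, (x - y) * ((1/b) * Real.exp (b*y) + 0 * Real.exp (-(b*y))) := by
        apply intervalIntegral.integral_congr_ae
        have h0 : ({(0:ℝ)}ᶜ : Set ℝ) ∈ MeasureTheory.ae volume :=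
          compl_mem_ae_iff.mpr (measure_singleton 0)
        filter_upwards [h0] with y hy hmem
        have hy0 : y < 0 := by
          rcases Set.mem_uIoc.mp hmem with ⟨h1, h2⟩ | ⟨h1, h2⟩
          · linarith
          · rcases lt_or_eq_of_le h2 with h | h
            · exact h
            · exact absurd h (Set.mem_compl_singleton_iff.mp hy)
        simp only [sfun, umfun, if_pos hx, if_pos hy0, ← hbdef]
        field_simp
        ring
      rw [hcong, key_int b x (1/b) 0 hb.ne']
      simp only [umfun, sfun, if_pos hx, ← hbdef]
      rw [← hb2]
      field_simp
      ring
    · have hcong : (∫ y in (0:ℝ)..x, (sfun κ x - sfun κ y) * umfun α κ y) =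
          ∫ y in (0:ℝ)..x, (x - y) * ((1/b + 1/κ) * Real.exp (b*y) + (1/κ) * Real.exp (-(b*y))) := by
        apply intervalIntegral.integral_congr
        intro y hy
        rw [Set.uIcc_of_le hx] at hy
        have hy0 : ¬ y < 0 := not_lt.mpr hy.1
        simp only [sfun, umfun, if_neg hy0, if_neg (not_lt.mpr hx), neg_mul, ← hbdef]
        field_simp
        ring
      rw [hcong, key_int b x (1/b + 1/κ) (1/κ) hb.ne']
      simp only [umfun, sfun, if_neg (not_lt.mpr hx), neg_mul, ← hbdef]
      rw [← hb2]
      field_simp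
      ring
  · -- the Wronskian
    intro x
    have hmul : HasDerivAt (fun y : ℝ => b*y) b x := by
      simpa using (hasDerivAt_id x).const_mul b
    have ep : HasDerivAt (fun y => Real.exp (b*y)) (Real.exp (b*x) * b) x := hmul.exp
    have em : HasDerivAt (fun y => Real.exp (-(b*y))) (Real.exp (-(b*x)) * (-b)) x :=
      hmul.neg.exp
    rcases lt_or_ge x 0 with hx | hx
    · refine ⟨Real.exp (b*x),
        -Real.exp (-(b*x)) + (b*Real.exp (b*x) - b*Real.exp (-(b*x)))/κ, ?_, ?_, ?_⟩
      · have H : HasDerivAt (fun y => Real.exp (b*y)/b) (Real.exp (b*x)) x := by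
          have := ep.div_const b
          refine this.congr_deriv ?_
          field_simp
        have hev : umfun α κ =ᶠ[nhds x] (fun y => Real.exp (b*y)/b) := by
          filter_upwards [Iio_mem_nhds hx] with y hy
          have : y < 0 := hy
          simp [umfun, this, ← hbdef]
        exact (hev.hasDerivAt_iff.mpr H).hasDerivWithinAt
      · have H : HasDerivAt
            (fun y => Real.exp (-(b*y))/b + (Real.exp (b*y) + Real.exp (-(b*y)))/κ)
            (-Real.exp (-(b*x)) + (b*Real.exp (b*x) - b*Real.exp (-(b*x)))/κ) x := by
          have := (em.div_const b).add ((ep.add em).div_const κ)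
          refine this.congr_deriv ?_
          field_simp
          ring
        have hev : upfun α κ =ᶠ[nhds x]
            (fun y => Real.exp (-(b*y))/b + (Real.exp (b*y) + Real.exp (-(b*y)))/κ) := by
          filter_upwards [Iio_mem_nhds hx] with y hy
          have : y < 0 := hy
          simp [upfun, this, neg_mul, ← hbdef]
        exact (hev.hasDerivAt_iff.mpr H).hasDerivWithinAt
      · simp only [upfun, umfun, if_pos hx, neg_mul, Real.exp_neg, ← hbdef]
        have := Real.exp_pos (b*x)
        field_simp
        ring
    · refine ⟨Real.exp (b*x) + (b*Real.exp (b*x) - b*Real.exp (-(b*x)))/κ,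
        -Real.exp (-(b*x)), ?_, ?_, ?_⟩
      · have H : HasDerivAt
            (fun y => Real.exp (b*y)/b + (Real.exp (b*y) + Real.exp (-(b*y)))/κ)
            (Real.exp (b*x) + (b*Real.exp (b*x) - b*Real.exp (-(b*x)))/κ) x := by
          have := (ep.div_const b).add ((ep.add em).div_const κ)
          refine this.congr_deriv ?_
          field_simp
          ring
        apply H.hasDerivWithinAt.congr
        · intro y hy
          have : ¬ y < 0 := not_lt.mpr (le_trans hx hy)
          simp [umfun, this, neg_mul, ← hbdef]
        · simp [umfun, not_lt.mpr hx, neg_mul, ← hbdef]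
      · have H : HasDerivAt (fun y => Real.exp (-(b*y))/b) (-Real.exp (-(b*x))) x := by
          have := em.div_const b
          refine this.congr_deriv ?_
          field_simp
        apply H.hasDerivWithinAt.congr
        · intro y hy
          have : ¬ y < 0 := not_lt.mpr (le_trans hx hy)
          simp [upfun, this, neg_mul, ← hbdef]
        · simp [upfun, not_lt.mpr hx, neg_mul, ← hbdef]
      · simp only [upfun, umfun, if_neg (not_lt.mpr hx), neg_mul, Real.exp_neg, ← hbdef]
        have := Real.exp_pos (b*x)
        field_simp
        ring
end

section
/- The set E_m satisfies inf E_m = l and sup E_m = r, and E_m ∪ {l, r} is a closed subset of [−∞,∞]; that is, E_m is a nearly closed subset of [−∞,∞] with endpoints l and r. -/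
open Set Filter Topology

/-- `l₀ = inf {x ∈ ℝ : m(x) > −∞}`, as an extended real. -/
noncomputable def lZero (m : ℝ → EReal) : EReal :=
  sInf ((fun x : ℝ => (x : EReal)) '' {x : ℝ | ⊥ < m x})

/-- `r₀ = sup {x ∈ ℝ : m(x) < ∞}`, as an extended real. -/
noncomputable def rZero (m : ℝ → EReal) : EReal :=
  sSup ((fun x : ℝ => (x : EReal)) '' {x : ℝ | m x < ⊤})

/-- `m(l₀)` (understood as `m(−∞) = lim_{x→−∞} m(x)` when `l₀ = −∞`): by right
continuity and monotonicity of `m`, this is `inf {m(x) : x > l₀}`. -/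
noncomputable def mlZero (m : ℝ → EReal) : EReal :=
  sInf (m '' {x : ℝ | lZero m < (x : EReal)})

/-- `m(r₀−) = sup {m(x) : x < r₀}`. -/
noncomputable def mrZero (m : ℝ → EReal) : EReal :=
  sSup (m '' {x : ℝ | (x : EReal) < rZero m})

/-- `l = inf {x > l₀ : m(x) > m(l₀)}`. -/
noncomputable def lpt (m : ℝ → EReal) : EReal :=
  sInf ((fun x : ℝ => (x : EReal)) '' {x : ℝ | lZero m < (x : EReal) ∧ mlZero m < m x})

/-- `r = sup {x < r₀ : m(x) < m(r₀−)}`. -/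
noncomputable def rpt (m : ℝ → EReal) : EReal :=
  sSup ((fun x : ℝ => (x : EReal)) '' {x : ℝ | (x : EReal) < rZero m ∧ m x < mrZero m})

/-- `E_m = {x ∈ [l,r] ∩ (l₀,r₀) : m(x−ε) < m(x+ε) for every ε > 0}`. -/
def Em (m : ℝ → EReal) : Set ℝ :=
  {x : ℝ | lpt m ≤ (x : EReal) ∧ (x : EReal) ≤ rpt m ∧
    lZero m < (x : EReal) ∧ (x : EReal) < rZero m ∧
    ∀ ε : ℝ, 0 < ε → m (x - ε) < m (x + ε)}


private lemma ereal_le_of_forall_gt {a b : EReal} (h : ∀ x : ℝ, b < (x:EReal) → a ≤ (x:EReal)) :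
    a ≤ b := by
  by_contra hlt
  push_neg at hlt
  obtain ⟨x, hbx, hxa⟩ := EReal.exists_between_coe_real hlt
  exact absurd (h x hbx) (not_le.2 hxa)

private lemma ereal_le_of_forall_lt {a b : EReal} (h : ∀ x : ℝ, (x:EReal) < a → (x:EReal) ≤ b) :
    a ≤ b := by
  by_contra hlt
  push_neg at hlt
  obtain ⟨x, hbx, hxa⟩ := EReal.exists_between_coe_real hlt
  exact absurd (h x hxa) (not_le.2 hbx)

private lemma growth_exists (m : ℝ → EReal) (hmono : Monotone m) {z y : ℝ}
    (h : m z < m y) :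
    ∃ c : ℝ, z ≤ c ∧ c ≤ y ∧ ∀ ε : ℝ, 0 < ε → m (c - ε) < m (c + ε) := by
  have hzy : z < y := hmono.reflect_lt h
  set T : Set ℝ := {t | t ∈ Icc z y ∧ m t ≤ m z} with hT
  have hzT : z ∈ T := ⟨⟨le_rfl, hzy.le⟩, le_rfl⟩
  have hne : T.Nonempty := ⟨z, hzT⟩
  have hbdd : BddAbove T := ⟨y, fun t ht => ht.1.2⟩
  set c := sSup T with hc
  have hzc : z ≤ c := le_csSup hbdd hzT
  have hcy : c ≤ y := csSup_le hne fun t ht => ht.1.2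
  refine ⟨c, hzc, hcy, fun ε hε => ?_⟩
  have hlow : m (c - ε) ≤ m z := by
    obtain ⟨t, htT, htl⟩ := exists_lt_of_lt_csSup hne (show c - ε < c by linarith)
    exact le_trans (hmono htl.le) htT.2
  have hup : m z < m (c + ε) := by
    by_cases hy : c + ε ≤ y
    · have hnotT : c + ε ∉ T := fun hmem => by
        have := le_csSup hbdd hmem; linarith
      have : ¬ m (c + ε) ≤ m z := fun hle =>
        hnotT ⟨⟨by linarith, hy⟩, hle⟩
      exact lt_of_not_ge this
    · exact lt_of_lt_of_le h (hmono (by linarith))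
  exact lt_of_le_of_lt hlow hup

private lemma lZero_le_lpt (m : ℝ → EReal) : lZero m ≤ lpt m :=
  le_sInf fun b hb => by
    obtain ⟨x, hx, rfl⟩ := hb
    exact hx.1.le

private lemma rpt_le_rZero (m : ℝ → EReal) : rpt m ≤ rZero m :=
  sSup_le fun b hb => by
    obtain ⟨x, hx, rfl⟩ := hb
    exact hx.1.le

/-- A growth point strictly inside `(l₀, r₀)` satisfies `l ≤ c`. -/
private lemma lpt_le_growth (m : ℝ → EReal) (hmono : Monotone m) {c : ℝ}
    (h1 : lZero m < (c:EReal)) (hg : ∀ ε : ℝ, 0 < ε → m (c - ε) < m (c + ε)) :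
    lpt m ≤ (c:EReal) := by
  apply ereal_le_of_forall_gt
  intro q hq
  rw [EReal.coe_lt_coe_iff] at hq
  obtain ⟨w, hw1, hw2⟩ := EReal.exists_between_coe_real h1
  rw [EReal.coe_lt_coe_iff] at hw2
  set ε : ℝ := q - c with hεdef
  have hε : 0 < ε := by linarith
  set δ : ℝ := min ε (c - w) with hδdef
  have hδ : 0 < δ := lt_min hε (by linarith)
  have hqA : q ∈ {x : ℝ | lZero m < (x:EReal) ∧ mlZero m < m x} := by
    constructor
    · exact lt_trans h1 (by exact_mod_cast hq)
    · have h1' : mlZero m ≤ m (c - δ) := by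
        apply sInf_le
        exact ⟨c - δ, lt_of_lt_of_le hw1 (by exact_mod_cast (show w ≤ c - δ by
          have := min_le_right ε (c - w); linarith)), rfl⟩
      have h2' : m (c + δ) ≤ m q := hmono (by
        have := min_le_left ε (c - w); simp only [hεdef] at *; linarith)
      exact lt_of_le_of_lt h1' (lt_of_lt_of_le (hg δ hδ) h2')
  exact sInf_le ⟨q, hqA, rfl⟩

/-- A growth point strictly inside `(l₀, r₀)` satisfies `c ≤ r`. -/
private lemma growth_le_rpt (m : ℝ → EReal) (hmono : Monotone m) {c : ℝ}
    (h1 : (c:EReal) < rZero m) (hg : ∀ ε : ℝ, 0 < ε → m (c - ε) < m (c + ε)) :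
    (c:EReal) ≤ rpt m := by
  apply ereal_le_of_forall_lt
  intro q hq
  rw [EReal.coe_lt_coe_iff] at hq
  obtain ⟨w, hw1, hw2⟩ := EReal.exists_between_coe_real h1
  rw [EReal.coe_lt_coe_iff] at hw1
  set ε : ℝ := c - q with hεdef
  have hε : 0 < ε := by linarith
  set δ : ℝ := min ε (w - c) with hδdef
  have hδ : 0 < δ := lt_min hε (by linarith)
  have hqB : q ∈ {x : ℝ | (x:EReal) < rZero m ∧ m x < mrZero m} := by
    constructor
    · exact lt_trans (by exact_mod_cast hq) h1
    · have h1' : m q ≤ m (c - δ) := hmono (by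
        have := min_le_left ε (w - c); simp only [hεdef] at *; linarith)
      have h2' : m (c + δ) ≤ mrZero m := by
        apply le_sSup
        exact ⟨c + δ, lt_of_le_of_lt (by exact_mod_cast (show c + δ ≤ w by
          have := min_le_right ε (w - c); linarith)) hw2, rfl⟩
      exact lt_of_le_of_lt h1' (lt_of_lt_of_le (hg δ hδ) h2')
  exact le_sSup ⟨q, hqB, rfl⟩

private lemma growthSet_closed (m : ℝ → EReal) (hmono : Monotone m) :
    IsClosed {x : ℝ | ∀ ε : ℝ, 0 < ε → m (x - ε) < m (x + ε)} := by
  rw [← isOpen_compl_iff]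
  rw [Metric.isOpen_iff]
  intro x hx
  simp only [mem_compl_iff, mem_setOf_eq, not_forall] at hx
  obtain ⟨ε, hε, hle⟩ := hx
  rw [not_lt] at hle
  refine ⟨ε / 2, by linarith, fun y hy => ?_⟩
  rw [Metric.mem_ball, Real.dist_eq, abs_lt] at hy
  simp only [mem_compl_iff, mem_setOf_eq, not_forall]
  refine ⟨ε / 2, by linarith, ?_⟩
  rw [not_lt]
  calc m (y + ε / 2) ≤ m (x + ε) := hmono (by linarith)
    _ ≤ m (x - ε) := hle
    _ ≤ m (y - ε / 2) := hmono (by linarith)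
theorem stmt19 (m : ℝ → EReal) (hmono : Monotone m)
    (hrc : ∀ x : ℝ, ContinuousWithinAt m (Set.Ici x) x)
    (hnc : ∃ x y : ℝ, m x ≠ m y)
    (hlr : lpt m < rpt m) :
    sInf ((fun x : ℝ => (x : EReal)) '' Em m) = lpt m ∧
    sSup ((fun x : ℝ => (x : EReal)) '' Em m) = rpt m ∧
    IsClosed (((fun x : ℝ => (x : EReal)) '' Em m) ∪ {lpt m, rpt m}) := by
  -- key: existence of growth points in E_m below any real `a` with `lpt < a < rpt`,
  -- and above any real `a` with `lpt < a < rpt`.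
  have key : ∀ a : ℝ, lpt m < (a:EReal) → (a:EReal) < rpt m →
      (∃ x ∈ Em m, x < a) ∧ (∃ x ∈ Em m, a < x) := by
    intro a hla har
    constructor
    · -- from lpt < a : get y in the defining set of lpt with y < a
      obtain ⟨b, hbmem, hba⟩ := sInf_lt_iff.1 hla
      obtain ⟨y, hyA, rfl⟩ := hbmem
      rw [EReal.coe_lt_coe_iff] at hba
      obtain ⟨hly, hmy⟩ := hyA
      -- from mlZero < m y : get z with l₀ < z and m z < m y
      obtain ⟨v, hvmem, hvlt⟩ := sInf_lt_iff.1 hmy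
      obtain ⟨z, hzl, rfl⟩ := hvmem
      obtain ⟨c, hzc, hcy, hg⟩ := growth_exists m hmono hvlt
      have hl0c : lZero m < (c:EReal) :=
        lt_of_lt_of_le hzl (by exact_mod_cast hzc)
      have hcr0 : (c:EReal) < rZero m := by
        have h1 : (c:EReal) < rpt m :=
          lt_of_le_of_lt (by exact_mod_cast (show c ≤ a by linarith)) har
        exact lt_of_lt_of_le h1 (rpt_le_rZero m)
      refine ⟨c, ⟨lpt_le_growth m hmono hl0c hg, growth_le_rpt m hmono hcr0 hg,
        hl0c, hcr0, hg⟩, by linarith⟩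
    · -- symmetric
      obtain ⟨b, hbmem, hba⟩ := lt_sSup_iff.1 har
      obtain ⟨y, hyB, rfl⟩ := hbmem
      rw [EReal.coe_lt_coe_iff] at hba
      obtain ⟨hry, hmy⟩ := hyB
      obtain ⟨v, hvmem, hvlt⟩ := lt_sSup_iff.1 hmy
      obtain ⟨z, hzr, rfl⟩ := hvmem
      obtain ⟨c, hyc, hcz, hg⟩ := growth_exists m hmono hvlt
      have hcr0 : (c:EReal) < rZero m :=
        lt_of_le_of_lt (by exact_mod_cast hcz) hzr
      have hl0c : lZero m < (c:EReal) := by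
        have h1 : lpt m < (c:EReal) :=
          lt_of_lt_of_le hla (by exact_mod_cast (show a ≤ c by linarith))
        exact lt_of_le_of_lt (lZero_le_lpt m) h1
      refine ⟨c, ⟨lpt_le_growth m hmono hl0c hg, growth_le_rpt m hmono hcr0 hg,
        hl0c, hcr0, hg⟩, by linarith⟩
  have hEsub : ∀ x ∈ Em m, lpt m ≤ (x:EReal) ∧ (x:EReal) ≤ rpt m :=
    fun x hx => ⟨hx.1, hx.2.1⟩
  have hinf : sInf ((fun x : ℝ => (x : EReal)) '' Em m) = lpt m := by
    refine le_antisymm ?_ (le_sInf fun b hb => by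
      obtain ⟨x, hx, rfl⟩ := hb; exact hx.1)
    apply ereal_le_of_forall_gt
    intro q hq
    obtain ⟨a, ha1, ha2⟩ := EReal.exists_between_coe_real (lt_min hq hlr)
    rw [lt_min_iff] at ha2
    obtain ⟨⟨x, hxE, hxa⟩, -⟩ := key a ha1 ha2.2
    calc sInf ((fun x : ℝ => (x : EReal)) '' Em m) ≤ (x:EReal) := sInf_le ⟨x, hxE, rfl⟩
      _ ≤ (q:EReal) := by exact_mod_cast (show x ≤ q by
          have := ha2.1; rw [EReal.coe_lt_coe_iff] at this; linarith)
  have hsup : sSup ((fun x : ℝ => (x : EReal)) '' Em m) = rpt m := by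
    refine le_antisymm (sSup_le fun b hb => by
      obtain ⟨x, hx, rfl⟩ := hb; exact hx.2.1) ?_
    apply ereal_le_of_forall_lt
    intro q hq
    obtain ⟨a, ha1, ha2⟩ := EReal.exists_between_coe_real (max_lt hq hlr)
    rw [max_lt_iff] at ha1
    obtain ⟨-, ⟨x, hxE, hxa⟩⟩ := key a ha1.2 ha2
    calc (q:EReal) ≤ (x:EReal) := by exact_mod_cast (show q ≤ x by
          have := ha1.1; rw [EReal.coe_lt_coe_iff] at this; linarith)
      _ ≤ sSup ((fun x : ℝ => (x : EReal)) '' Em m) := le_sSup ⟨x, hxE, rfl⟩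
  refine ⟨hinf, hsup, ?_⟩
  -- closedness
  have hclosure : closure ((fun x : ℝ => (x : EReal)) '' Em m) ⊆
      ((fun x : ℝ => (x : EReal)) '' Em m) ∪ {lpt m, rpt m} := by
    intro p hp
    have hIcc : p ∈ Icc (lpt m) (rpt m) := by
      refine closure_minimal ?_ isClosed_Icc hp
      rintro _ ⟨x, hx, rfl⟩
      exact ⟨hx.1, hx.2.1⟩
    rcases eq_or_lt_of_le hIcc.1 with hpl | hpl
    · exact Or.inr (Or.inl hpl.symm)
    rcases eq_or_lt_of_le hIcc.2 with hpr | hpr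
    · exact Or.inr (Or.inr hpr)
    -- lpt < p < rpt, so p is a real number
    have hpbot : p ≠ ⊥ := fun h => by simp [h] at hpl
    have hptop : p ≠ ⊤ := fun h => by simp [h] at hpr
    lift p to ℝ using ⟨hptop, hpbot⟩ with x hx
    left
    have hxcl : x ∈ closure (Em m) := by
      rw [EReal.isEmbedding_coe.closure_eq_preimage_closure_image (Em m)]
      exact hp
    have hxG : ∀ ε : ℝ, 0 < ε → m (x - ε) < m (x + ε) := by
      have hsub2 : Em m ⊆ {x : ℝ | ∀ ε : ℝ, 0 < ε → m (x - ε) < m (x + ε)} :=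
        fun t ht => ht.2.2.2.2
      exact (closure_minimal hsub2 (growthSet_closed m hmono)) hxcl
    have hl0x : lZero m < (x:EReal) := lt_of_le_of_lt (lZero_le_lpt m) hpl
    have hxr0 : (x:EReal) < rZero m := lt_of_lt_of_le hpr (rpt_le_rZero m)
    exact ⟨x, ⟨hpl.le, hpr.le, hl0x, hxr0, hxG⟩, rfl⟩
  have hfin : IsClosed ({lpt m, rpt m} : Set EReal) :=
    (Set.toFinite _).isClosed
  apply isClosed_of_closure_subset
  rw [closure_union, hfin.closure_eq]
  exact union_subset hclosure subset_union_right
end
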